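/- arXiv:2508.15906 — 2 statements merged into one kernel-verified Lean document; each statement's English description precedes it below -/
import Mathlib

section
/- If M and N are closed subspaces of a Hilbert space H such that M + N is closed, then for every closed subspace L with N ⊆ L, the modular law holds: L ∩ (closure of (M + N)) = (closure of ((L ∩ M) + N)); equivalently L ⊓ (M ⊔ N) = (L ⊓ M) ⊔ N in the lattice of closed subspaces. -/
/-- If `M + N` is closed, then for every closed subspace `L` with `N ⊆ L` the modular law
`L ⊓ (M ⊔ N) = (L ⊓ M) ⊔ N` holds in the lattice of closed subspaces (sups taken as
topological closures of sums). -/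
theorem modular_law_of_closed_sum
    {H : Type*} [NormedAddCommGroup H] [InnerProductSpace ℂ H] [CompleteSpace H]
    (M N : Submodule ℂ H)
    (hM : IsClosed (M : Set H)) (hN : IsClosed (N : Set H))
    (hMN : IsClosed ((M ⊔ N : Submodule ℂ H) : Set H)) :
    ∀ L : Submodule ℂ H, IsClosed (L : Set H) → N ≤ L →
      L ⊓ (M ⊔ N).topologicalClosure = ((L ⊓ M) ⊔ N).topologicalClosure := by
  intro L hL hNL
  have hmod : L ⊓ (M ⊔ N) = (L ⊓ M) ⊔ N := (inf_sup_assoc_of_le _ hNL).symm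
  have h1 : (M ⊔ N).topologicalClosure = M ⊔ N :=
    SetLike.coe_injective hMN.closure_eq
  have h2 : IsClosed (((L ⊓ M) ⊔ N : Submodule ℂ H) : Set H) := by
    rw [← hmod]
    exact hL.inter hMN
  have h3 : ((L ⊓ M) ⊔ N).topologicalClosure = (L ⊓ M) ⊔ N :=
    SetLike.coe_injective h2.closure_eq
  rw [h1, h3, hmod]
end

section
/- Let L¹ ⊥ L⁰ and M¹ ⊥ M⁰ be two pairs of orthogonal closed subspaces of a Hilbert space H with L¹ ⊆ M¹ and M⁰ ⊆ L⁰. Then (L¹ + L⁰) ∩ (M¹ + M⁰) = L¹ + (L⁰ ∩ M¹) + M⁰, and the three summands L¹, L⁰ ∩ M¹, M⁰ are pairwise orthogonal. -/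
/-- For orthocomplemented pairs `(L1, L0)` and `(M1, M0)` with `L1 ⊆ M1` and `M0 ⊆ L0`,
the meet of their domains is `L1 + (L0 ∩ M1) + M0`, and the three summands are pairwise
orthogonal. -/
theorem meet_of_domains_decomposition
    {H : Type*} [NormedAddCommGroup H] [InnerProductSpace ℂ H] [CompleteSpace H]
    (L1 L0 M1 M0 : Submodule ℂ H)
    (hL1 : IsClosed (L1 : Set H)) (hL0 : IsClosed (L0 : Set H))
    (hM1 : IsClosed (M1 : Set H)) (hM0 : IsClosed (M0 : Set H))
    (horthL : ∀ x ∈ L1, ∀ y ∈ L0, (inner ℂ x y : ℂ) = 0)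
    (horthM : ∀ x ∈ M1, ∀ y ∈ M0, (inner ℂ x y : ℂ) = 0)
    (h1 : L1 ≤ M1) (h0 : M0 ≤ L0) :
    ((L1 ⊔ L0) ⊓ (M1 ⊔ M0) = L1 ⊔ ((L0 ⊓ M1) ⊔ M0)) ∧
    (∀ x ∈ L1, ∀ y ∈ L0 ⊓ M1, (inner ℂ x y : ℂ) = 0) ∧
    (∀ x ∈ L1, ∀ y ∈ M0, (inner ℂ x y : ℂ) = 0) ∧
    (∀ x ∈ L0 ⊓ M1, ∀ y ∈ M0, (inner ℂ x y : ℂ) = 0) := by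
  refine ⟨?_, ?_, ?_, ?_⟩
  · apply le_antisymm
    · rintro z ⟨hzL, hzM⟩
      simp only [SetLike.mem_coe, Submodule.mem_sup] at hzL hzM
      obtain ⟨a, ha, b, hb, rfl⟩ := hzL
      obtain ⟨c, hc, d, hd, habcd⟩ := hzM
      rw [Submodule.mem_sup]
      refine ⟨a, ha, (b - d) + d, ?_, by abel⟩
      rw [Submodule.mem_sup]
      refine ⟨b - d, ⟨L0.sub_mem hb (h0 hd), ?_⟩, d, hd, rfl⟩
      have hbd : b - d = c - a := by
        rw [sub_eq_sub_iff_add_eq_add, add_comm b a, ← habcd]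
      rw [hbd]
      exact M1.sub_mem hc (h1 ha)
    · exact sup_le (le_inf le_sup_left ((h1.trans le_sup_left)))
        (sup_le (le_inf (inf_le_left.trans le_sup_right) (inf_le_right.trans le_sup_left))
          (le_inf (h0.trans le_sup_right) le_sup_right))
  · exact fun x hx y hy => horthL x hx y hy.1
  · exact fun x hx y hy => horthL x hx y (h0 hy)
  · exact fun x hx y hy => horthM x hx.2 y hy
end
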